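/- Let F_q be a finite field of characteristic p, and let R be a multivariable polynomial over F_q in k variables of total degree n with 1 ≤ n < p. Let R° : (F_q^k)^n → F_q be the polarization of R, regarded as an n-tensor with each block equal to F_q^k. Then PR(R°) ≥ rank(R), i.e. the partition rank of the polarization of R is at least the rank of R. -/
import Mathlib


open Polynomial Finset

noncomputable section
open scoped Classical

/-- A homogeneous polynomial is reducible if it is a product of two homogeneous
polynomials of positive degree. -/
def ReducibleHom {F σ : Type} [CommSemiring F] (P : MvPolynomial σ F) : Prop :=
  ∃ (a b : ℕ) (A B : MvPolynomial σ F), 0 < a ∧ 0 < b ∧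
    A.IsHomogeneous a ∧ B.IsHomogeneous b ∧ P = A * B

/-- The rank of a multivariable polynomial `R`: the smallest `r` such that the
top-degree homogeneous component of `R` is a sum of `r` reducible homogeneous polynomials. -/
def polyRank {F σ : Type} [CommSemiring F] (R : MvPolynomial σ F) : ℕ :=
  sInf {r | ∃ P : Fin r → MvPolynomial σ F, (∀ i, ReducibleHom (P i)) ∧
    MvPolynomial.homogeneousComponent R.totalDegree R = ∑ i, P i}

/-- A polynomial `T` in variables `σ` grouped into blocks by `blk : σ → β` is
multilinear on a set `s` of blocks if every monomial of `T` has total degree `1` in the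
variables of each block in `s` and degree `0` in the variables of each block outside `s`. -/
def BlockMultilinearOn {F σ β : Type} [CommSemiring F] [Fintype σ] (blk : σ → β)
    (T : MvPolynomial σ F) (s : Set β) : Prop :=
  ∀ d ∈ T.support, ∀ i : β,
    (∑ x : σ, if blk x = i then d x else 0) = if i ∈ s then 1 else 0

/-- The partition rank of a tensor (multilinear polynomial) `T` with blocks given by
`blk`: the smallest `r` such that `T = Σ_{s=1}^r A_s · B_s`, where `A_s` is multilinear
in the blocks of a nonempty proper subset `S_s` and `B_s` is multilinear in the
complementary blocks. -/
def partitionRank {F σ β : Type} [CommSemiring F] [Fintype σ] (blk : σ → β)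
    (T : MvPolynomial σ F) : ℕ :=
  sInf {r | ∃ (A B : Fin r → MvPolynomial σ F) (s : Fin r → Set β),
    (∀ t, (s t).Nonempty ∧ s t ≠ Set.univ ∧
      BlockMultilinearOn blk (A t) (s t) ∧ BlockMultilinearOn blk (B t) (s t)ᶜ) ∧
    T = ∑ t, A t * B t}

/-- The polarization of a polynomial `R` in `k` variables, as a polynomial in `n` blocks
of `k` variables: `R°(h₁, …, hₙ) = Δ_{h₁} ⋯ Δ_{hₙ} R = Σ_{S ⊆ [n]} (−1)^{n−|S|} R(Σ_{i∈S} hᵢ)`.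
The variable `(i, t)` is the `t`-th coordinate of the block `hᵢ`. -/
def polarPoly {F : Type} [CommRing F] {k : ℕ} (n : ℕ) (R : MvPolynomial (Fin k) F) :
    MvPolynomial (Fin n × Fin k) F :=
  ∑ S : Finset (Fin n), (-1 : MvPolynomial (Fin n × Fin k) F) ^ (n - S.card) *
    MvPolynomial.aeval (fun t : Fin k => ∑ i ∈ S, MvPolynomial.X (i, t)) R


section Lemmas

open MvPolynomial

/-- Inclusion–exclusion: alternating sum over supersets of `B`. -/
lemma lemA {F : Type} [CommRing F] {n : ℕ} (B : Finset (Fin n)) :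
    (∑ S : Finset (Fin n), if B ⊆ S then (-1 : F) ^ (n - S.card) else 0)
      = if B = Finset.univ then 1 else 0 := by
  rw [← Equiv.sum_comp (compl_involutive.toPerm : Equiv.Perm (Finset (Fin n)))]
  have h1 : ∀ S : Finset (Fin n), n - Sᶜ.card = S.card := by
    intro S
    rw [Finset.card_compl, Fintype.card_fin]
    exact Nat.sub_sub_self (by simpa using Finset.card_le_univ S)
  have h2 : ∀ S : Finset (Fin n), (B ⊆ Sᶜ) = (S ∈ Bᶜ.powerset) := by
    intro S
    simp [Finset.mem_powerset, Finset.subset_compl_comm]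
  simp only [Function.Involutive.coe_toPerm, h1, h2]
  rw [Finset.sum_ite_mem, Finset.univ_inter]
  have hcast : (∑ m ∈ Bᶜ.powerset, (-1 : F) ^ m.card)
      = ((∑ m ∈ Bᶜ.powerset, (-1 : ℤ) ^ m.card : ℤ) : F) := by
    push_cast
    rfl
  rw [hcast, Finset.sum_powerset_neg_one_pow_card]
  by_cases hB : B = Finset.univ
  · simp [hB]
  · have : Bᶜ ≠ ∅ := by
      simpa [Finset.compl_eq_empty_iff] using hB
    simp [hB, this]

/-- Counting identity: `∑_S (-1)^{n-|S|} |S|^d = n!` if `d = n`, `0` if `d < n`. -/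
lemma lemB {F : Type} [CommRing F] (n d : ℕ) (hd : d ≤ n) :
    (∑ S : Finset (Fin n), (-1 : F) ^ (n - S.card) * (S.card : F) ^ d)
      = if d = n then (n.factorial : F) else 0 := by
  have step1 : ∀ S : Finset (Fin n), ((S.card : F)) ^ d
      = ∑ g : Fin d → Fin n, (if ∀ i, g i ∈ S then (1 : F) else 0) := by
    intro S
    rw [Finset.sum_boole]
    have : Finset.univ.filter (fun g : Fin d → Fin n => ∀ i, g i ∈ S)
        = Fintype.piFinset (fun _ : Fin d => S) := by
      ext g; simp [Fintype.mem_piFinset]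
    rw [this, Fintype.card_piFinset]
    push_cast
    simp
  simp only [step1, Finset.mul_sum]
  rw [Finset.sum_comm]
  have hinner : ∀ g : Fin d → Fin n,
      (∑ S : Finset (Fin n), (-1 : F) ^ (n - S.card) * (if ∀ i, g i ∈ S then (1:F) else 0))
        = if Finset.image g Finset.univ = Finset.univ then 1 else 0 := by
    intro g
    have : ∀ S : Finset (Fin n),
        (-1 : F) ^ (n - S.card) * (if ∀ i, g i ∈ S then (1:F) else 0)
          = if Finset.image g Finset.univ ⊆ S then (-1 : F) ^ (n - S.card) else 0 := by
      intro S
      have hiff : (∀ i, g i ∈ S) ↔ Finset.image g Finset.univ ⊆ S := by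
        rw [Finset.image_subset_iff]; simp
      by_cases h : ∀ i, g i ∈ S
      · rw [if_pos h, if_pos (hiff.1 h), mul_one]
      · rw [if_neg h, if_neg (fun hh => h (hiff.2 hh)), mul_zero]
    simp only [this]
    exact lemA _
  simp only [hinner]
  rw [Finset.sum_boole]
  have hcount : (Finset.univ.filter
      (fun g : Fin d → Fin n => Finset.image g Finset.univ = Finset.univ)).card
      = if d = n then n.factorial else 0 := by
    by_cases hdn : d = n
    · subst hdn
      have himg : ∀ g : Fin d → Fin d,
          (Finset.image g Finset.univ = Finset.univ ↔ Function.Bijective g) := by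
        intro g
        constructor
        · intro h
          rw [Fintype.bijective_iff_surjective_and_card]
          refine ⟨fun y => ?_, rfl⟩
          have : y ∈ Finset.image g Finset.univ := by rw [h]; exact Finset.mem_univ y
          simpa using Finset.mem_image.1 this
        · intro hb
          apply Finset.eq_univ_of_forall
          intro y
          obtain ⟨x, hx⟩ := hb.2 y
          exact Finset.mem_image.2 ⟨x, Finset.mem_univ x, hx⟩
      rw [Finset.filter_congr (fun g _ => by rw [himg g])]
      have e : Equiv.Perm (Fin d) ≃ {g : Fin d → Fin d // Function.Bijective g} :=
        ⟨fun p => ⟨p, p.bijective⟩, fun g => Equiv.ofBijective g.1 g.2,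
          fun p => by ext x; rfl, fun g => by ext x; rfl⟩
      rw [← Fintype.card_subtype, ← Fintype.card_congr e, Fintype.card_perm, Fintype.card_fin,
        if_pos rfl]
    · rw [if_neg hdn]
      rw [Finset.card_eq_zero, Finset.filter_eq_empty_iff]
      intro g _
      intro h
      have h1 : (Finset.image g Finset.univ).card ≤ d := by
        simpa using Finset.card_image_le (s := (Finset.univ : Finset (Fin d))) (f := g)
      rw [h] at h1
      simp only [Finset.card_univ, Fintype.card_fin] at h1
      exact hdn (le_antisymm hd h1)
  rw [hcount]
  split_ifs <;> simp

end Lemmas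

section LemC

open MvPolynomial

variable {F : Type} [CommRing F] {k : ℕ}

lemma aeval_CmulX_monomial (c : F) (m : Fin k →₀ ℕ) (a : F) :
    MvPolynomial.aeval (fun t : Fin k => MvPolynomial.C c * MvPolynomial.X t)
        (MvPolynomial.monomial m a)
      = MvPolynomial.C (c ^ m.degree) * MvPolynomial.monomial m a := by
  rw [MvPolynomial.aeval_monomial, Finsupp.prod]
  simp_rw [mul_pow]
  rw [Finset.prod_mul_distrib]
  have h1 : (∏ x ∈ m.support, (MvPolynomial.C c : MvPolynomial (Fin k) F) ^ m x)
      = MvPolynomial.C (c ^ m.degree) := by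
    simp_rw [← map_pow]
    rw [← map_prod, Finset.prod_pow_eq_pow_sum]
    rfl
  rw [h1, MvPolynomial.monomial_eq, Finsupp.prod, MvPolynomial.algebraMap_eq]
  ring

lemma aeval_CmulX (c : F) (R : MvPolynomial (Fin k) F) :
    MvPolynomial.aeval (fun t : Fin k => MvPolynomial.C c * MvPolynomial.X t) R
      = ∑ i ∈ Finset.range (R.totalDegree + 1),
          MvPolynomial.C (c ^ i) * MvPolynomial.homogeneousComponent i R := by
  conv_lhs => rw [R.as_sum]
  rw [map_sum]
  simp_rw [aeval_CmulX_monomial]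
  symm
  calc ∑ i ∈ Finset.range (R.totalDegree + 1),
        MvPolynomial.C (c ^ i) * MvPolynomial.homogeneousComponent i R
      = ∑ i ∈ Finset.range (R.totalDegree + 1), ∑ m ∈ R.support with m.degree = i,
          MvPolynomial.C (c ^ m.degree) * MvPolynomial.monomial m (MvPolynomial.coeff m R) := by
        refine Finset.sum_congr rfl fun i _ => ?_
        rw [MvPolynomial.homogeneousComponent_apply, Finset.mul_sum]
        refine Finset.sum_congr rfl fun m hm => ?_
        rw [(Finset.mem_filter.1 hm).2]
    _ = ∑ m ∈ R.support,
          MvPolynomial.C (c ^ m.degree) * MvPolynomial.monomial m (MvPolynomial.coeff m R) := by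
        refine Finset.sum_fiberwise_of_maps_to (fun m hm => ?_) _
        rw [Finset.mem_range, Nat.lt_succ_iff]
        exact MvPolynomial.le_totalDegree hm

end LemC

section Diag

open MvPolynomial

variable {F : Type} [CommRing F] {k n : ℕ}

lemma diag_E (S : Finset (Fin n)) (R : MvPolynomial (Fin k) F) :
    MvPolynomial.aeval (R := F) (fun x : Fin n × Fin k => (MvPolynomial.X x.2 : MvPolynomial (Fin k) F))
        (MvPolynomial.aeval (R := F) (fun t : Fin k => ∑ i ∈ S, MvPolynomial.X (i, t)) R)
      = MvPolynomial.aeval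
          (fun t : Fin k => MvPolynomial.C (S.card : F) * MvPolynomial.X t) R := by
  rw [MvPolynomial.comp_aeval_apply (R := F)]
  have hf : (fun t : Fin k =>
      (MvPolynomial.aeval (R := F) fun x : Fin n × Fin k =>
        (MvPolynomial.X x.2 : MvPolynomial (Fin k) F)) (∑ i ∈ S, MvPolynomial.X (i, t)))
      = fun t : Fin k => MvPolynomial.C (S.card : F) * MvPolynomial.X t := by
    funext t
    rw [map_sum]
    simp only [MvPolynomial.aeval_X]
    rw [Finset.sum_const, nsmul_eq_mul,
      map_natCast (MvPolynomial.C : F →+* MvPolynomial (Fin k) F) S.card]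
  rw [hf]

lemma diag_polar (R : MvPolynomial (Fin k) F) (hn : R.totalDegree = n) :
    MvPolynomial.aeval (R := F) (fun x : Fin n × Fin k => (MvPolynomial.X x.2 : MvPolynomial (Fin k) F))
        (polarPoly n R)
      = MvPolynomial.C (n.factorial : F) * MvPolynomial.homogeneousComponent n R := by
  unfold polarPoly
  rw [map_sum]
  simp only [map_mul, map_pow, map_neg, map_one, diag_E]
  simp_rw [aeval_CmulX, hn, Finset.mul_sum]
  rw [Finset.sum_comm]
  have hneg : (-1 : MvPolynomial (Fin k) F) = MvPolynomial.C (-1 : F) := by simp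
  have hinner : ∀ i ∈ Finset.range (n + 1),
      (∑ S : Finset (Fin n), (-1 : MvPolynomial (Fin k) F) ^ (n - S.card) *
          (MvPolynomial.C ((S.card : F) ^ i) * MvPolynomial.homogeneousComponent i R))
        = MvPolynomial.C (if i = n then (n.factorial : F) else 0) *
            MvPolynomial.homogeneousComponent i R := by
    intro i hi
    have : ∀ S : Finset (Fin n),
        (-1 : MvPolynomial (Fin k) F) ^ (n - S.card) *
            (MvPolynomial.C ((S.card : F) ^ i) * MvPolynomial.homogeneousComponent i R)
          = MvPolynomial.C ((-1 : F) ^ (n - S.card) * (S.card : F) ^ i) *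
              MvPolynomial.homogeneousComponent i R := by
      intro S
      rw [hneg, ← map_pow, ← mul_assoc, ← map_mul]
    simp only [this]
    rw [← Finset.sum_mul, ← map_sum, lemB n i (Finset.mem_range_succ_iff.mp hi)]
  rw [Finset.sum_congr rfl hinner]
  rw [Finset.sum_eq_single n]
  · rw [if_pos rfl]
  · intro i _ hi
    rw [if_neg hi, map_zero, zero_mul]
  · intro h
    exact absurd (Finset.self_mem_range_succ n) h

end Diag


section Proj

open MvPolynomial

variable {F : Type} [CommRing F] {k n : ℕ}

/-- The substitution killing all variables whose block lies outside `S`. -/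
def projV (S : Finset (Fin n)) : Fin n × Fin k → MvPolynomial (Fin n × Fin k) F :=
  fun x => if x.1 ∈ S then MvPolynomial.X x else 0

lemma proj_aeval_monomial (S : Finset (Fin n)) (m : Fin n × Fin k →₀ ℕ) (a : F) :
    MvPolynomial.aeval (R := F) (projV (F := F) (k := k) S) (MvPolynomial.monomial m a)
      = if (∀ x ∈ m.support, x.1 ∈ S) then MvPolynomial.monomial m a else 0 := by
  rw [MvPolynomial.aeval_monomial]
  by_cases h : ∀ x ∈ m.support, x.1 ∈ S
  · rw [if_pos h, Finsupp.prod]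
    have : (∏ x ∈ m.support, (projV (F := F) (k := k) S x) ^ m x)
        = ∏ x ∈ m.support, (MvPolynomial.X x : MvPolynomial (Fin n × Fin k) F) ^ m x := by
      refine Finset.prod_congr rfl fun x hx => ?_
      rw [projV, if_pos (h x hx)]
    rw [this, MvPolynomial.monomial_eq, MvPolynomial.algebraMap_eq, Finsupp.prod]
  · rw [if_neg h]
    push_neg at h
    obtain ⟨x0, hx0, hx0S⟩ := h
    rw [Finsupp.prod, Finset.prod_eq_zero hx0, mul_zero]
    rw [projV, if_neg hx0S]
    exact zero_pow (Finsupp.mem_support_iff.1 hx0)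

lemma coeff_proj (S : Finset (Fin n)) (T : MvPolynomial (Fin n × Fin k) F)
    (d : Fin n × Fin k →₀ ℕ) :
    MvPolynomial.coeff d (MvPolynomial.aeval (R := F) (projV (F := F) (k := k) S) T)
      = if (∀ x ∈ d.support, x.1 ∈ S) then MvPolynomial.coeff d T else 0 := by
  conv_lhs => rw [T.as_sum]
  rw [map_sum, MvPolynomial.coeff_sum]
  simp_rw [proj_aeval_monomial]
  by_cases hd : ∀ x ∈ d.support, x.1 ∈ S
  · rw [if_pos hd]
    rw [Finset.sum_eq_single d]
    · rw [if_pos hd, MvPolynomial.coeff_monomial, if_pos rfl]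
    · intro m _ hmd
      split_ifs with h'
      · rw [MvPolynomial.coeff_monomial, if_neg hmd]
      · exact MvPolynomial.coeff_zero _
    · intro hdd
      rw [if_pos hd, MvPolynomial.coeff_monomial, if_pos rfl]
      exact (MvPolynomial.notMem_support_iff.1 hdd)
  · rw [if_neg hd]
    refine Finset.sum_eq_zero fun m _ => ?_
    split_ifs with h'
    · rw [MvPolynomial.coeff_monomial]
      split_ifs with h''
      · exact absurd (h'' ▸ h') hd
      · rfl
    · exact MvPolynomial.coeff_zero _

lemma proj_E (S S' : Finset (Fin n)) (R : MvPolynomial (Fin k) F) :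
    MvPolynomial.aeval (R := F) (projV (F := F) (k := k) S)
        (MvPolynomial.aeval (R := F) (fun t : Fin k => ∑ i ∈ S', MvPolynomial.X (i, t)) R)
      = MvPolynomial.aeval (R := F) (fun t : Fin k => ∑ i ∈ S' ∩ S, MvPolynomial.X (i, t)) R := by
  rw [MvPolynomial.comp_aeval_apply (R := F)]
  have hf : (fun t : Fin k =>
      MvPolynomial.aeval (R := F) (projV (F := F) (k := k) S) (∑ i ∈ S', MvPolynomial.X (i, t)))
      = fun t : Fin k =>
        (∑ i ∈ S' ∩ S, MvPolynomial.X (i, t) : MvPolynomial (Fin n × Fin k) F) := by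
    funext t
    rw [map_sum]
    simp only [MvPolynomial.aeval_X, projV]
    exact Finset.sum_ite_mem S' S (fun i => (MvPolynomial.X (i, t) : MvPolynomial (Fin n × Fin k) F))
  rw [hf]

lemma coeff_E (S : Finset (Fin n)) (R : MvPolynomial (Fin k) F) (d : Fin n × Fin k →₀ ℕ) :
    MvPolynomial.coeff d
        (MvPolynomial.aeval (R := F) (fun t : Fin k =>
          ∑ i ∈ S, (MvPolynomial.X (i, t) : MvPolynomial (Fin n × Fin k) F)) R)
      = if (∀ x ∈ d.support, x.1 ∈ S) then
          MvPolynomial.coeff d (MvPolynomial.aeval (R := F)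
            (fun t : Fin k => ∑ i ∈ (Finset.univ : Finset (Fin n)),
              (MvPolynomial.X (i, t) : MvPolynomial (Fin n × Fin k) F)) R)
        else 0 := by
  have h := proj_E (F := F) (k := k) S Finset.univ R
  rw [Finset.univ_inter] at h
  rw [← h, coeff_proj]

lemma totalDegree_E_le [Nontrivial F] (S : Finset (Fin n)) (R : MvPolynomial (Fin k) F) :
    (MvPolynomial.aeval (R := F)
        (fun t : Fin k =>
          ∑ i ∈ S, (MvPolynomial.X (i, t) : MvPolynomial (Fin n × Fin k) F)) R).totalDegree
      ≤ R.totalDegree := by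
  conv_lhs => rw [R.as_sum]
  rw [map_sum]
  refine (MvPolynomial.totalDegree_finset_sum _ _).trans ?_
  refine Finset.sup_le fun m hm => ?_
  rw [MvPolynomial.aeval_monomial]
  refine (MvPolynomial.totalDegree_mul _ _).trans ?_
  have h1 : (algebraMap F (MvPolynomial (Fin n × Fin k) F) (MvPolynomial.coeff m R)).totalDegree
      = 0 := by
    rw [MvPolynomial.algebraMap_eq, MvPolynomial.totalDegree_C]
  rw [h1, zero_add, Finsupp.prod]
  refine (MvPolynomial.totalDegree_finset_prod _ _).trans ?_
  have h2 : ∀ t ∈ m.support,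
      ((∑ i ∈ S, MvPolynomial.X (i, t) : MvPolynomial (Fin n × Fin k) F) ^ m t).totalDegree
        ≤ m t := by
    intro t _
    refine (MvPolynomial.totalDegree_pow _ _).trans ?_
    have : (∑ i ∈ S, MvPolynomial.X (i, t) : MvPolynomial (Fin n × Fin k) F).totalDegree ≤ 1 := by
      refine (MvPolynomial.totalDegree_finset_sum _ _).trans ?_
      refine Finset.sup_le fun i _ => ?_
      rw [MvPolynomial.totalDegree_X]
    calc m t * (∑ i ∈ S, MvPolynomial.X (i, t) :
          MvPolynomial (Fin n × Fin k) F).totalDegree ≤ m t * 1 :=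
        Nat.mul_le_mul_left _ this
      _ = m t := mul_one _
  refine (Finset.sum_le_sum h2).trans ?_
  exact MvPolynomial.le_totalDegree hm

end Proj


section Multilinear

open MvPolynomial

variable {F : Type} [CommRing F] {k n : ℕ}

lemma coeff_polar (R : MvPolynomial (Fin k) F) (d : Fin n × Fin k →₀ ℕ) :
    MvPolynomial.coeff d (polarPoly n R)
      = (if Finset.image Prod.fst d.support = Finset.univ then (1 : F) else 0) *
          MvPolynomial.coeff d (MvPolynomial.aeval (R := F)
            (fun t : Fin k => ∑ i ∈ (Finset.univ : Finset (Fin n)),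
              (MvPolynomial.X (i, t) : MvPolynomial (Fin n × Fin k) F)) R) := by
  unfold polarPoly
  rw [MvPolynomial.coeff_sum]
  have hneg : (-1 : MvPolynomial (Fin n × Fin k) F) = MvPolynomial.C (-1 : F) := by simp
  have hterm : ∀ S : Finset (Fin n),
      MvPolynomial.coeff d ((-1 : MvPolynomial (Fin n × Fin k) F) ^ (n - S.card) *
          MvPolynomial.aeval (fun t : Fin k => ∑ i ∈ S, MvPolynomial.X (i, t)) R)
        = (if Finset.image Prod.fst d.support ⊆ S then (-1 : F) ^ (n - S.card) else 0) *
            MvPolynomial.coeff d (MvPolynomial.aeval (R := F)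
              (fun t : Fin k => ∑ i ∈ (Finset.univ : Finset (Fin n)),
                (MvPolynomial.X (i, t) : MvPolynomial (Fin n × Fin k) F)) R) := by
    intro S
    rw [hneg, ← map_pow, MvPolynomial.coeff_C_mul, coeff_E]
    have hiff : (∀ x ∈ d.support, x.1 ∈ S) ↔ Finset.image Prod.fst d.support ⊆ S :=
      Finset.image_subset_iff.symm
    by_cases h : Finset.image Prod.fst d.support ⊆ S
    · rw [if_pos (hiff.2 h), if_pos h]
    · rw [if_neg (fun hh => h (hiff.1 hh)), if_neg h, mul_zero, zero_mul]
  rw [Finset.sum_congr rfl fun S _ => hterm S, ← Finset.sum_mul, lemA]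

lemma polar_block_degree [Nontrivial F] (R : MvPolynomial (Fin k) F) (hn : R.totalDegree = n)
    (d : Fin n × Fin k →₀ ℕ) (hd : d ∈ (polarPoly n R).support) (i : Fin n) :
    (∑ x : Fin n × Fin k, if x.1 = i then d x else 0) = 1 := by
  have hc : MvPolynomial.coeff d (polarPoly n R) ≠ 0 := MvPolynomial.mem_support_iff.1 hd
  rw [coeff_polar] at hc
  have himg : Finset.image Prod.fst d.support = Finset.univ := by
    by_contra h
    rw [if_neg h, zero_mul] at hc
    exact hc rfl
  have hcE : MvPolynomial.coeff d (MvPolynomial.aeval (R := F)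
      (fun t : Fin k => ∑ i ∈ (Finset.univ : Finset (Fin n)),
        (MvPolynomial.X (i, t) : MvPolynomial (Fin n × Fin k) F)) R) ≠ 0 := by
    intro h
    rw [h, mul_zero] at hc
    exact hc rfl
  -- total degree bound
  have hdeg : (∑ x : Fin n × Fin k, d x) ≤ n := by
    have h1 : d ∈ (MvPolynomial.aeval (R := F)
        (fun t : Fin k => ∑ i ∈ (Finset.univ : Finset (Fin n)),
          (MvPolynomial.X (i, t) : MvPolynomial (Fin n × Fin k) F)) R).support :=
      MvPolynomial.mem_support_iff.2 hcE
    have h2 := (MvPolynomial.le_totalDegree h1).trans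
      ((totalDegree_E_le Finset.univ R).trans_eq hn)
    have h3 : (∑ x : Fin n × Fin k, d x) = ∑ x ∈ d.support, d x :=
      (Finset.sum_subset (Finset.subset_univ _)
        (fun x _ hx => Finsupp.notMem_support_iff.1 hx)).symm
    exact h3.le.trans h2
  -- each block degree at least one
  set f : Fin n → ℕ := fun j => ∑ x : Fin n × Fin k, if x.1 = j then d x else 0 with hf
  have hge : ∀ j : Fin n, 1 ≤ f j := by
    intro j
    have : j ∈ Finset.image Prod.fst d.support := himg ▸ Finset.mem_univ j
    obtain ⟨x, hx, hxj⟩ := Finset.mem_image.1 this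
    have h1 : 1 ≤ d x := Nat.one_le_iff_ne_zero.2 (Finsupp.mem_support_iff.1 hx)
    calc 1 ≤ d x := h1
      _ = (if x.1 = j then d x else 0) := by rw [if_pos hxj]
      _ ≤ f j := Finset.single_le_sum (f := fun x => if x.1 = j then d x else 0)
          (fun _ _ => Nat.zero_le _) (Finset.mem_univ x)
  have hsum : (∑ j : Fin n, f j) = ∑ x : Fin n × Fin k, d x := by
    rw [Finset.sum_comm]
    refine Finset.sum_congr rfl fun x _ => ?_
    rw [Finset.sum_ite_eq (Finset.univ : Finset (Fin n)) x.1 (fun _ => d x), if_pos (Finset.mem_univ _)]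
  have hone : ∀ j ∈ (Finset.univ : Finset (Fin n)), (fun _ => 1 : Fin n → ℕ) j = f j := by
    rw [← Finset.sum_eq_sum_iff_of_le (fun j _ => hge j)]
    have : (∑ _j : Fin n, 1) = n := by simp
    have h2 : (∑ j : Fin n, f j) ≤ ∑ _j : Fin n, (1:ℕ) := by
      rw [this, hsum]; exact hdeg
    exact le_antisymm (Finset.sum_le_sum fun j _ => hge j) h2
  exact (hone i (Finset.mem_univ i)).symm

end Multilinear


section Final

open MvPolynomial

variable {F : Type} [CommRing F] {k n : ℕ}

lemma pos_ind {s : Set (Fin n)} (hs : s.Nonempty) :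
    0 < ∑ i : Fin n, if i ∈ s then 1 else 0 := by
  obtain ⟨i0, hi0⟩ := hs
  have h : (1:ℕ) ≤ ∑ i : Fin n, if i ∈ s then 1 else 0 := by
    calc (1:ℕ) = if i0 ∈ s then 1 else 0 := (if_pos hi0).symm
      _ ≤ _ := Finset.single_le_sum (f := fun i => if i ∈ s then (1:ℕ) else 0)
          (fun _ _ => Nat.zero_le _) (Finset.mem_univ i0)
  omega

lemma diag_homog (A : MvPolynomial (Fin n × Fin k) F) (s : Set (Fin n))
    (hA : BlockMultilinearOn Prod.fst A s) :
    (MvPolynomial.aeval (R := F)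
        (fun x : Fin n × Fin k => (MvPolynomial.X x.2 : MvPolynomial (Fin k) F)) A).IsHomogeneous
      (∑ i : Fin n, if i ∈ s then 1 else 0) := by
  conv in A => rw [A.as_sum]
  rw [map_sum]
  apply MvPolynomial.IsHomogeneous.sum
  intro m hm
  rw [MvPolynomial.aeval_monomial]
  have hdeg : (∑ x ∈ m.support, m x) = ∑ i : Fin n, (if i ∈ s then 1 else 0) := by
    calc (∑ x ∈ m.support, m x) = ∑ x : Fin n × Fin k, m x :=
        Finset.sum_subset (Finset.subset_univ _)
          (fun x _ hx => Finsupp.notMem_support_iff.1 hx)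
      _ = ∑ i : Fin n, ∑ x : Fin n × Fin k, (if x.1 = i then m x else 0) := by
          rw [Finset.sum_comm]
          refine Finset.sum_congr rfl fun x _ => ?_
          rw [Finset.sum_ite_eq (Finset.univ : Finset (Fin n)) x.1 (fun _ => m x),
            if_pos (Finset.mem_univ _)]
      _ = ∑ i : Fin n, (if i ∈ s then 1 else 0) := by
          refine Finset.sum_congr rfl fun i _ => Eq.trans ?_ (hA m hm i)
          refine Finset.sum_congr rfl fun x _ => ?_
          by_cases h1 : x.1 = i
          · rw [if_pos h1, if_pos h1]
          · rw [if_neg h1, if_neg h1]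
  have h2 : ((m.prod fun x e => (MvPolynomial.X x.2 : MvPolynomial (Fin k) F) ^ e)).IsHomogeneous
      (∑ x ∈ m.support, m x) := by
    rw [Finsupp.prod]
    exact MvPolynomial.IsHomogeneous.prod _ _ _
      (fun x _ => MvPolynomial.isHomogeneous_X_pow _ _)
  have h0 : (algebraMap F (MvPolynomial (Fin k) F) (MvPolynomial.coeff m A)).IsHomogeneous 0 := by
    rw [MvPolynomial.algebraMap_eq]
    exact MvPolynomial.isHomogeneous_C _ _
  have h3 := h0.mul h2
  rwa [zero_add, hdeg] at h3

lemma homogeneousComponent_totalDegree_ne_zero (R : MvPolynomial (Fin k) F) (hR : R ≠ 0) :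
    MvPolynomial.homogeneousComponent R.totalDegree R ≠ 0 := by
  have hsupp : R.support.Nonempty := by
    rw [Finset.nonempty_iff_ne_empty]
    simpa [MvPolynomial.support_eq_empty] using hR
  obtain ⟨m, hm, hdeg⟩ := Finset.exists_mem_eq_sup R.support hsupp
    (fun m : Fin k →₀ ℕ => m.sum fun _ e => e)
  intro h0
  have h1 := congrArg (MvPolynomial.coeff m) h0
  rw [MvPolynomial.coeff_homogeneousComponent, MvPolynomial.coeff_zero] at h1
  have hdd : m.degree = R.totalDegree := by
    rw [MvPolynomial.totalDegree, hdeg]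
    rfl
  rw [if_pos hdd] at h1
  exact MvPolynomial.mem_support_iff.1 hm h1

end Final

section Witness

open MvPolynomial

lemma prs_witness {F : Type} [Field F] {k n : ℕ} (R : MvPolynomial (Fin k) F)
    (hn : R.totalDegree = n) (h2 : 2 ≤ n) :
    ∃ (A B : Fin (polarPoly n R).support.card → MvPolynomial (Fin n × Fin k) F)
      (s : Fin (polarPoly n R).support.card → Set (Fin n)),
      (∀ t, (s t).Nonempty ∧ s t ≠ Set.univ ∧
        BlockMultilinearOn Prod.fst (A t) (s t) ∧ BlockMultilinearOn Prod.fst (B t) (s t)ᶜ) ∧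
      polarPoly n R = ∑ t, A t * B t := by
  set T := polarPoly n R with hT
  set e : Fin T.support.card ≃ {x // x ∈ T.support} := T.support.equivFin.symm with he
  have hn0 : 0 < n := by omega
  have hn1 : 1 < n := by omega
  let i0 : Fin n := ⟨0, hn0⟩
  let i1 : Fin n := ⟨1, hn1⟩
  have hml : ∀ (t : Fin T.support.card) (i : Fin n),
      (∑ x : Fin n × Fin k, if x.1 = i then (e t : Fin n × Fin k →₀ ℕ) x else 0) = 1 :=
    fun t i => polar_block_degree R hn (e t) (e t).2 i
  refine ⟨fun t => MvPolynomial.monomial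
      ((e t : Fin n × Fin k →₀ ℕ).filter (fun x => x.1 = i0)) 1,
    fun t => MvPolynomial.monomial
      ((e t : Fin n × Fin k →₀ ℕ).filter (fun x => ¬ x.1 = i0))
      (MvPolynomial.coeff (e t) T),
    fun _ => {i0}, fun t => ⟨⟨i0, rfl⟩, ?_, ?_, ?_⟩, ?_⟩
  · intro h
    have h' : ({i0} : Set (Fin n)) = Set.univ := h
    have h1 : i1 ∈ ({i0} : Set (Fin n)) := by rw [h']; exact Set.mem_univ i1
    have h3 : i1 = i0 := h1
    have h4 : (1 : ℕ) = 0 := congrArg Fin.val h3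
    exact Nat.one_ne_zero h4
  · -- A is multilinear on {i0}
    intro d hd i
    rw [MvPolynomial.support_monomial, if_neg (one_ne_zero (α := F))] at hd
    rw [Finset.mem_singleton] at hd
    subst hd
    by_cases hi : i = i0
    · rw [if_pos (by simp [hi] : i ∈ ({i0} : Set (Fin n)))]
      refine Eq.trans (Finset.sum_congr rfl fun x _ => ?_) (hml t i)
      by_cases h1 : x.1 = i
      · rw [if_pos h1, if_pos h1, Finsupp.filter_apply, if_pos (h1.trans hi)]
      · rw [if_neg h1, if_neg h1]
    · rw [if_neg (by simpa using hi)]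
      refine Finset.sum_eq_zero fun x _ => ?_
      by_cases h1 : x.1 = i
      · rw [if_pos h1, Finsupp.filter_apply, if_neg (by rw [h1]; exact hi)]
      · rw [if_neg h1]
  · -- B is multilinear on {i0}ᶜ
    intro d hd i
    rw [MvPolynomial.support_monomial] at hd
    by_cases hc : MvPolynomial.coeff (e t : Fin n × Fin k →₀ ℕ) T = 0
    · rw [if_pos hc] at hd
      exact absurd hd (Finset.notMem_empty d)
    rw [if_neg hc, Finset.mem_singleton] at hd
    subst hd
    by_cases hi : i = i0
    · rw [if_neg (by simp [hi] : ¬ i ∈ ({i0}ᶜ : Set (Fin n)))]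
      refine Finset.sum_eq_zero fun x _ => ?_
      by_cases h1 : x.1 = i
      · rw [if_pos h1, Finsupp.filter_apply, if_neg (by simp [h1, hi])]
      · rw [if_neg h1]
    · rw [if_pos (by simpa using hi)]
      refine Eq.trans (Finset.sum_congr rfl fun x _ => ?_) (hml t i)
      by_cases h1 : x.1 = i
      · rw [if_pos h1, if_pos h1, Finsupp.filter_apply,
          if_pos (fun hh => hi (h1.symm.trans hh))]
      · rw [if_neg h1, if_neg h1]
  · -- the sum
    have hsplit : ∀ t, (MvPolynomial.monomial
        ((e t : Fin n × Fin k →₀ ℕ).filter (fun x => x.1 = i0)) (1:F)) *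
        (MvPolynomial.monomial ((e t : Fin n × Fin k →₀ ℕ).filter (fun x => ¬ x.1 = i0))
          (MvPolynomial.coeff (e t) T))
        = MvPolynomial.monomial (e t : Fin n × Fin k →₀ ℕ) (MvPolynomial.coeff (e t) T) := by
      intro t
      rw [MvPolynomial.monomial_mul, one_mul,
        Finsupp.filter_pos_add_filter_neg (e t : Fin n × Fin k →₀ ℕ) (fun x => x.1 = i0)]
    rw [Finset.sum_congr rfl fun t _ => hsplit t]
    rw [Equiv.sum_comp e (fun x : {x // x ∈ T.support} =>
      MvPolynomial.monomial (x : Fin n × Fin k →₀ ℕ) (MvPolynomial.coeff x T))]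
    rw [Finset.sum_coe_sort T.support (fun m => MvPolynomial.monomial m (MvPolynomial.coeff m T))]
    exact (MvPolynomial.support_sum_monomial_coeff T).symm

end Witness

/-- For a polynomial `R` over a finite field of characteristic `p`, of total degree `n`
with `1 ≤ n < p`, the partition rank of the polarization `R°` (as an `n`-tensor with each
block of variables equal to `F^k`, blocks given by the first projection) is at least the
rank of `R`. -/
theorem partitionRank_polarization_ge_rank {F : Type} [Field F] [Fintype F] (p : ℕ)
    (hF : CharP F p) (k n : ℕ) (R : MvPolynomial (Fin k) F)
    (hn : R.totalDegree = n) (h1 : 1 ≤ n) (hnp : n < p) :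
    polyRank R ≤ partitionRank Prod.fst (polarPoly n R) := by
  classical
  haveI := hF
  have hp : Nat.Prime p := CharP.char_is_prime F p
  have hfac : (n.factorial : F) ≠ 0 := by
    rw [Ne, CharP.cast_eq_zero_iff F p, hp.dvd_factorial]
    omega
  set PRS : Set ℕ := {r | ∃ (A B : Fin r → MvPolynomial (Fin n × Fin k) F)
      (s : Fin r → Set (Fin n)),
    (∀ t, (s t).Nonempty ∧ s t ≠ Set.univ ∧
      BlockMultilinearOn Prod.fst (A t) (s t) ∧ BlockMultilinearOn Prod.fst (B t) (s t)ᶜ) ∧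
    polarPoly n R = ∑ t, A t * B t} with hPRS
  have hpr : partitionRank Prod.fst (polarPoly n R) = sInf PRS := rfl
  rw [hpr]
  rcases PRS.eq_empty_or_nonempty with hE | hNE
  · -- the partition-rank set is empty
    rw [hE, Nat.sInf_empty]
    rcases Nat.lt_or_ge n 2 with hn2 | hn2
    · -- n = 1 : the rank set is empty as well
      have hn1 : n = 1 := by omega
      have hempty : {r | ∃ P : Fin r → MvPolynomial (Fin k) F, (∀ i, ReducibleHom (P i)) ∧
          MvPolynomial.homogeneousComponent R.totalDegree R = ∑ i, P i} = ∅ := by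
        rw [Set.eq_empty_iff_forall_notMem]
        rintro r ⟨P, hred, hsum⟩
        have hRne : R ≠ 0 := by
          intro h
          rw [h, MvPolynomial.totalDegree_zero] at hn
          omega
        apply homogeneousComponent_totalDegree_ne_zero R hRne
        have hmem : MvPolynomial.homogeneousComponent R.totalDegree R ∈
            MvPolynomial.homogeneousSubmodule (Fin k) F R.totalDegree :=
          MvPolynomial.homogeneousComponent_mem _ _
        have h1 : MvPolynomial.homogeneousComponent R.totalDegree
            (MvPolynomial.homogeneousComponent R.totalDegree R)
            = MvPolynomial.homogeneousComponent R.totalDegree R := by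
          rw [MvPolynomial.homogeneousComponent_of_mem hmem, if_pos rfl]
        rw [← h1]
        conv_lhs => rw [hsum]
        rw [map_sum]
        refine Finset.sum_eq_zero fun t _ => ?_
        obtain ⟨a, b, A, B, ha, hb, hA, hB, hP⟩ := hred t
        have hmem2 : P t ∈ MvPolynomial.homogeneousSubmodule (Fin k) F (a + b) := by
          rw [MvPolynomial.mem_homogeneousSubmodule, hP]
          exact hA.mul hB
        rw [MvPolynomial.homogeneousComponent_of_mem hmem2,
          if_neg (by omega : ¬ R.totalDegree = a + b)]
      have : polyRank R = sInf {r | ∃ P : Fin r → MvPolynomial (Fin k) F,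
          (∀ i, ReducibleHom (P i)) ∧
          MvPolynomial.homogeneousComponent R.totalDegree R = ∑ i, P i} := rfl
      rw [this, hempty, Nat.sInf_empty]
    · -- n ≥ 2 : the partition-rank set is in fact nonempty, contradiction
      exfalso
      obtain ⟨A, B, s, hcond, heq⟩ := prs_witness R hn hn2
      have : (polarPoly n R).support.card ∈ PRS := ⟨A, B, s, hcond, heq⟩
      rw [hE] at this
      exact Set.notMem_empty _ this
  · -- the partition-rank set is nonempty : use the main argument
    obtain ⟨A, B, s, hcond, hTeq⟩ := Nat.sInf_mem hNE
    have key := diag_polar (n := n) R hn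
    rw [hTeq, map_sum] at key
    simp only [map_mul] at key
    -- key : ∑ t, diag (A t) * diag (B t) = C n! * HC n R
    apply Nat.sInf_le
    refine ⟨fun t => (MvPolynomial.C ((n.factorial : F)⁻¹) *
        MvPolynomial.aeval (R := F)
          (fun x : Fin n × Fin k => (MvPolynomial.X x.2 : MvPolynomial (Fin k) F)) (A t)) *
        MvPolynomial.aeval (R := F)
          (fun x : Fin n × Fin k => (MvPolynomial.X x.2 : MvPolynomial (Fin k) F)) (B t),
      fun t => ?_, ?_⟩
    · obtain ⟨hne, hnuniv, hAml, hBml⟩ := hcond t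
      refine ⟨_, _, _, _,
        pos_ind hne, pos_ind (Set.nonempty_compl.2 hnuniv), ?_, diag_homog _ _ hBml, rfl⟩
      have h3 := (MvPolynomial.isHomogeneous_C (Fin k) ((n.factorial : F)⁻¹)).mul
        (diag_homog (A t) (s t) hAml)
      rwa [zero_add] at h3
    · rw [hn]
      have hCu : MvPolynomial.C ((n.factorial : F)⁻¹) *
          MvPolynomial.C (n.factorial : F) = (1 : MvPolynomial (Fin k) F) := by
        rw [← map_mul, inv_mul_cancel₀ hfac, map_one]
      calc MvPolynomial.homogeneousComponent n R
          = MvPolynomial.C ((n.factorial : F)⁻¹) *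
              (MvPolynomial.C (n.factorial : F) *
                MvPolynomial.homogeneousComponent n R) := by
            rw [← mul_assoc, hCu, one_mul]
        _ = MvPolynomial.C ((n.factorial : F)⁻¹) *
              ∑ t, MvPolynomial.aeval (R := F)
                (fun x : Fin n × Fin k => (MvPolynomial.X x.2 : MvPolynomial (Fin k) F)) (A t) *
                MvPolynomial.aeval (R := F)
                (fun x : Fin n × Fin k => (MvPolynomial.X x.2 : MvPolynomial (Fin k) F)) (B t) := by
            rw [← key]
        _ = _ := by
            rw [Finset.mul_sum]
            exact Finset.sum_congr rfl fun t _ => (mul_assoc _ _ _).symm
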